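/- For the recursively defined rooted trees T̂_i, the total acquisition number satisfies a_t(T̂_i) = 1 for all i ≥ 0; in fact, there is an acquisition protocol moving all 2^i units of weight onto the root. -/

import Mathlib

/-- A total acquisition move: all the weight of `u` is moved to an adjacent
vertex `v`, provided `v` carries at least as much weight as `u`. -/
def AcqMove {V : Type*} [DecidableEq V] (G : SimpleGraph V) (w w' : V → ℕ) : Prop :=
  ∃ u v, G.Adj u v ∧ 0 < w u ∧ w u ≤ w v ∧
    w' = Function.update (Function.update w v (w v + w u)) u 0

/-- Reachability by a finite sequence of total acquisition moves. -/
def AcqReach {V : Type*} [DecidableEq V] (G : SimpleGraph V) : (V → ℕ) → (V → ℕ) → Prop :=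
  Relation.ReflTransGen (AcqMove G)

/-- No total acquisition move is available from `w`. -/
def AcqMaximal {V : Type*} [DecidableEq V] (G : SimpleGraph V) (w : V → ℕ) : Prop :=
  ∀ w', ¬ AcqMove G w w'

/-- The total acquisition number: minimum number of vertices with positive
weight after a maximal sequence of total acquisition moves starting from the
all-ones weight function. -/
noncomputable def totalAcq {V : Type*} [DecidableEq V] (G : SimpleGraph V) : ℕ :=
  sInf { m | ∃ w, AcqReach G (fun _ => 1) w ∧ AcqMaximal G w ∧
    m = {v | 0 < w v}.ncard }


/-- The recursively defined rooted tree `T̂_d`, encoded on vertex set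
`Finset (Fin d)`: the root is `∅`, and the children of a vertex `s` are the
sets `insert a s` with `a` smaller than every element of `s` (so the parent of
a nonempty vertex `t` is obtained by erasing its minimum).  The root `∅` thus
has children `{0}, {1}, …, {d-1}`, and `{j}` is the root of a copy of `T̂_j`,
exactly as in the recursive definition. -/
def hatT (d : ℕ) : SimpleGraph (Finset (Fin d)) where
  Adj s t :=
    (∃ a ∈ t, s = t.erase a ∧ ∀ b ∈ s, a < b) ∨
    (∃ a ∈ s, t = s.erase a ∧ ∀ b ∈ t, a < b)
  symm := ⟨fun s t h => Or.symm h⟩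
  loopless := ⟨by
    intro s h
    rcases h with ⟨a, ha, hs, _⟩ | ⟨a, ha, hs, _⟩ <;> rw [hs] at ha <;>
      exact Finset.notMem_erase _ _ ha⟩

/-- The number of vertices of `T̂_i`: the root together with one copy each of
`T̂_0, …, T̂_{i-1}`. -/
def hatTCard : (i : ℕ) → ℕ
  | i => 1 + ∑ j : Fin i, hatTCard j
  decreasing_by exact j.isLt

/-!
The weight is gathered at the root in stages `m = 0, …, i - 1`. Before stage `m` each vertex
`s ⊆ {m, …, i-1}` carries `2 ^ m` and every other vertex is empty. In stage `m` every such `s`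
containing `m` (which is then its minimum) moves its weight to its parent `s \ {m}`, which carries
the same weight; these moves form a matching, so they can be made one after another. After the
last stage the root carries `2 ^ i`. Since moves preserve the total weight, no terminal
configuration is empty, so `a_t(T̂_i) = 1`.
-/

open Finset Function

section Acquisition

variable {V : Type*} [DecidableEq V] {G : SimpleGraph V}

lemma Fintype.sum_update_add_eq {M : Type*} [AddCommMonoid M] [Fintype V] (f : V → M) (a : V)
    (b : M) : ∑ v, update f a b v + f a = ∑ v, f v + b := by
  rw [sum_update_of_mem (mem_univ a), sdiff_singleton_eq_erase, ← add_sum_erase _ f (mem_univ a)]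
  abel

lemma AcqMove.sum_eq [Fintype V] {w w' : V → ℕ} (h : AcqMove G w w') :
    ∑ v, w' v = ∑ v, w v := by
  obtain ⟨u, v, hadj, -, -, rfl⟩ := h
  have hv := Fintype.sum_update_add_eq w v (w v + w u)
  have hu := Fintype.sum_update_add_eq (update w v (w v + w u)) u 0
  rw [update_of_ne hadj.ne] at hu
  omega

lemma AcqReach.sum_eq [Fintype V] {w w' : V → ℕ} (h : AcqReach G w w') :
    ∑ v, w' v = ∑ v, w v := by
  induction h with
  | refl => rfl
  | tail _ hmove ih => rw [hmove.sum_eq, ih]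

lemma acqMaximal_of_eq_zero_of_ne {w : V → ℕ} {r : V} (hr : ∀ v ≠ r, w v = 0) :
    AcqMaximal G w := by
  rintro w' ⟨u, v, hadj, hu, huv, -⟩
  have hur : u = r := by_contra fun h => hu.ne' (hr u h)
  have hvr : v ≠ r := hur ▸ hadj.ne.symm
  rw [hr v hvr] at huv
  omega

lemma totalAcq_eq_one_of_acqReach [Fintype V] [Nonempty V] {w : V → ℕ} {r : V}
    (hw : AcqReach G (fun _ => 1) w) (hr : ∀ v ≠ r, w v = 0) : totalAcq G = 1 := by
  have hsum_pos : ∀ w', AcqReach G (fun _ => 1) w' → 0 < ∑ v, w' v := fun w' hw' => by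
    rw [hw'.sum_eq, sum_const, card_univ, smul_eq_mul, mul_one]
    exact Fintype.card_pos
  have hsupport : {v | 0 < w v} = {r} := by
    ext v
    refine ⟨fun hv => by_contra fun h => (Nat.pos_iff_ne_zero.mp hv) (hr v h), ?_⟩
    rintro rfl
    have := hsum_pos w hw
    rwa [sum_eq_single v fun u _ hu => hr u hu] at this
    simp
  have hterminal : AcqMaximal G w ∧ 1 = {v | 0 < w v}.ncard :=
    ⟨acqMaximal_of_eq_zero_of_ne hr, by rw [hsupport, Set.ncard_singleton]⟩
  apply le_antisymm
  · exact Nat.sInf_le ⟨w, hw, hterminal⟩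
  · refine le_csInf ⟨1, w, hw, hterminal⟩ ?_
    rintro _ ⟨w', hw', -, rfl⟩
    obtain ⟨v, -, hv⟩ := exists_ne_zero_of_sum_ne_zero (hsum_pos w' hw').ne'
    exact (Set.ncard_pos (Set.toFinite _)).mpr ⟨v, Nat.pos_of_ne_zero hv⟩

/-- Since no source is a target and no target is hit twice, each move along the matching still
sees the original weights at both of its ends. -/
lemma acqReach_transfer_of_injOn {w : V → ℕ} {f : V → V} {S : Finset V}
    (hadj : ∀ u ∈ S, G.Adj u (f u)) (hpos : ∀ u ∈ S, 0 < w u)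
    (hle : ∀ u ∈ S, w u ≤ w (f u))
    (hinj : Set.InjOn f S) (hout : ∀ u ∈ S, f u ∉ S) :
    AcqReach G w (fun v => if v ∈ S then 0 else w v + ∑ u ∈ S with f u = v, w u) := by
  induction S using Finset.induction_on with
  | empty =>
    simp only [notMem_empty, if_false, filter_empty, sum_empty, add_zero]
    exact Relation.ReflTransGen.refl
  | @insert a S ha ih =>
    rw [coe_insert, Set.injOn_insert ha] at hinj
    have hout' : ∀ u ∈ S, f u ≠ a ∧ f u ∉ S := fun u hu =>
      not_or.mp ((mem_insert).not.mp (hout u (mem_insert_of_mem hu)))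
    have hfa : f a ≠ a ∧ f a ∉ S :=
      not_or.mp ((mem_insert).not.mp (hout a (mem_insert_self a S)))
    have hsource : ∑ u ∈ S with f u = a, w u = 0 :=
      sum_eq_zero fun u hu => absurd (mem_filter.mp hu).2 (hout' u (mem_filter.mp hu).1).1
    have htarget : ∑ u ∈ S with f u = f a, w u = 0 :=
      sum_eq_zero fun u hu => absurd (mem_filter.mp hu).2 fun h =>
        hinj.2 ⟨u, (mem_filter.mp hu).1, h⟩
    refine (ih (fun u hu => hadj u (mem_insert_of_mem hu))
      (fun u hu => hpos u (mem_insert_of_mem hu)) (fun u hu => hle u (mem_insert_of_mem hu))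
      hinj.1 fun u hu => (hout' u hu).2).tail
      ⟨a, f a, hadj a (mem_insert_self a S), ?_, ?_, ?_⟩
    all_goals simp only [if_neg ha, if_neg hfa.2, hsource, htarget, add_zero]
    · exact hpos a (mem_insert_self a S)
    · exact hle a (mem_insert_self a S)
    funext v
    rcases eq_or_ne v a with rfl | hva
    · simp
    simp only [update_of_ne hva, mem_insert, hva, false_or, filter_insert]
    rcases eq_or_ne v (f a) with rfl | hvfa
    · rw [update_self, if_neg hfa.2, if_pos rfl, sum_insert fun h => ha (mem_filter.mp h).1,
        htarget]
      ring
    · rw [update_of_ne hvfa, if_neg (Ne.symm hvfa)]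

end Acquisition

lemma hatT_adj_erase {i : ℕ} {s : Finset (Fin i)} {a : Fin i} (ha : a ∈ s)
    (hmin : ∀ b ∈ s, a ≤ b) : (hatT i).Adj s (s.erase a) :=
  Or.inr ⟨a, ha, rfl, fun b hb =>
    lt_of_le_of_ne (hmin b (mem_of_mem_erase hb)) (ne_of_mem_erase hb).symm⟩

/-- The weights after `m` stages: each vertex `s ⊆ {m, …, i-1}` holds the weight of the `2 ^ m`
vertices `t` of its subtree with `t \ {0, …, m-1} = s`. -/
def levelWeight (i m : ℕ) (s : Finset (Fin i)) : ℕ :=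
  if ∀ a ∈ s, m ≤ (a : ℕ) then 2 ^ m else 0

lemma levelWeight_zero (i : ℕ) : levelWeight i 0 = fun _ => 1 :=
  funext fun _ => if_pos fun _ _ => Nat.zero_le _

lemma levelWeight_self_empty (i : ℕ) : levelWeight i i ∅ = 2 ^ i :=
  if_pos fun _ h => absurd h (notMem_empty _)

lemma levelWeight_self_of_ne_empty {i : ℕ} {s : Finset (Fin i)} (hs : s ≠ ∅) :
    levelWeight i i s = 0 :=
  if_neg fun h => by
    obtain ⟨a, ha⟩ := nonempty_iff_ne_empty.mpr hs
    exact (h a ha).not_gt a.isLt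

def levelSources {i : ℕ} (m : Fin i) : Finset (Finset (Fin i)) :=
  {s | m ∈ s ∧ ∀ a ∈ s, (m : ℕ) ≤ a}

lemma mem_levelSources {i : ℕ} {m : Fin i} {s : Finset (Fin i)} :
    s ∈ levelSources m ↔ m ∈ s ∧ ∀ a ∈ s, (m : ℕ) ≤ a := by
  simp [levelSources]

lemma levelWeight_of_mem_levelSources {i : ℕ} {m : Fin i} {s : Finset (Fin i)}
    (hs : s ∈ levelSources m) : levelWeight i m s = 2 ^ (m : ℕ) :=
  if_pos (mem_levelSources.mp hs).2

lemma lt_of_mem_erase_of_mem_levelSources {i : ℕ} {m : Fin i} {s : Finset (Fin i)}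
    (hs : s ∈ levelSources m) : ∀ a ∈ s.erase m, (m : ℕ) < a := fun a ha =>
  lt_of_le_of_ne ((mem_levelSources.mp hs).2 a (mem_of_mem_erase ha))
    (Fin.val_ne_of_ne (ne_of_mem_erase ha).symm)

lemma levelWeight_succ_eq {i : ℕ} (m : Fin i) (v : Finset (Fin i)) :
    levelWeight i (m + 1) v = if v ∈ levelSources m then 0 else
      levelWeight i m v + ∑ u ∈ levelSources m with u.erase m = v, levelWeight i m u := by
  by_cases hv : ∀ a ∈ v, (m : ℕ) < a
  · have hmv : m ∉ v := fun h => lt_irrefl _ (hv m h)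
    have hinsert : insert m v ∈ levelSources m := mem_levelSources.mpr
      ⟨mem_insert_self m v, fun a ha => by
        rcases mem_insert.mp ha with rfl | ha
        exacts [le_rfl, (hv a ha).le]⟩
    have hparent : {u ∈ levelSources m | u.erase m = v} = {insert m v} := by
      ext u
      simp only [mem_filter, mem_singleton]
      constructor
      · rintro ⟨hu, rfl⟩
        exact (insert_erase (mem_levelSources.mp hu).1).symm
      · rintro rfl
        exact ⟨hinsert, erase_insert hmv⟩
    rw [if_neg fun h => hmv (mem_levelSources.mp h).1, hparent, sum_singleton,
      levelWeight_of_mem_levelSources hinsert, levelWeight, levelWeight,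
      if_pos (show ∀ a ∈ v, (m : ℕ) + 1 ≤ a from hv), if_pos fun a ha => (hv a ha).le,
      pow_succ]
    ring
  · rw [levelWeight, if_neg (show ¬∀ a ∈ v, (m : ℕ) + 1 ≤ a from hv)]
    split_ifs with hvS
    · rfl
    have hsum : ∑ u ∈ levelSources m with u.erase m = v, levelWeight i m u = 0 :=
      sum_eq_zero fun u hu => by
        obtain ⟨huS, rfl⟩ := mem_filter.mp hu
        exact absurd (lt_of_mem_erase_of_mem_levelSources huS) hv
    have hlevel : levelWeight i m v = 0 := if_neg fun h => hvS <| mem_levelSources.mpr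
      ⟨by_contra fun hmv => hv fun a ha =>
        lt_of_le_of_ne (h a ha) fun e => hmv (Fin.ext e ▸ ha), h⟩
    rw [hsum, hlevel]

lemma acqReach_levelWeight_succ {i : ℕ} (m : Fin i) :
    AcqReach (hatT i) (levelWeight i m) (levelWeight i (m + 1)) := by
  have hweight_erase {s} (hs : s ∈ levelSources m) :
      levelWeight i m (s.erase m) = 2 ^ (m : ℕ) :=
    if_pos fun a ha => (lt_of_mem_erase_of_mem_levelSources hs a ha).le
  rw [funext (levelWeight_succ_eq m)]
  refine acqReach_transfer_of_injOn
    (fun s hs => hatT_adj_erase (mem_levelSources.mp hs).1 (mem_levelSources.mp hs).2)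
    (fun s hs => ?_) (fun s hs => ?_) (fun s hs t ht hst => ?_)
    (fun s _ h => notMem_erase m s (mem_levelSources.mp h).1)
  · rw [levelWeight_of_mem_levelSources hs]
    positivity
  · rw [levelWeight_of_mem_levelSources hs, hweight_erase hs]
  · rw [← insert_erase (mem_levelSources.mp hs).1, ← insert_erase (mem_levelSources.mp ht).1]
    exact congrArg _ hst

lemma acqReach_levelWeight {i m : ℕ} (hm : m ≤ i) :
    AcqReach (hatT i) (fun _ => 1) (levelWeight i m) := by
  induction m with
  | zero =>
    rw [levelWeight_zero]
    exact Relation.ReflTransGen.refl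
  | succ m ih => exact (ih (by omega)).trans (acqReach_levelWeight_succ ⟨m, hm⟩)

/-- `a_t(T̂_i) = 1`; in fact there is an acquisition protocol moving all
`2 ^ i` units of weight onto the root `∅`. -/
theorem totalAcq_hatT (i : ℕ) :
    totalAcq (hatT i) = 1 ∧
    ∃ w : Finset (Fin i) → ℕ,
      AcqReach (hatT i) (fun _ => 1) w ∧
      w ∅ = 2 ^ i ∧ ∀ s, s ≠ ∅ → w s = 0 :=
  have hreach := acqReach_levelWeight (le_refl i)
  ⟨totalAcq_eq_one_of_acqReach hreach fun _ => levelWeight_self_of_ne_empty,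
    _, hreach, levelWeight_self_empty i, fun _ => levelWeight_self_of_ne_empty⟩
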